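/- arXiv:2506.07404 — 2 statements merged into one kernel-verified Lean document; each statement's English description precedes it below -/
import Mathlib

section
/- Conservation of entropy under the Arıkan transform for two (possibly different) BSCs: h₂(p₁ ⋆ p₂) + h₂⁺ = h₂(p₁) + h₂(p₂), where h₂⁺ = H(U₂ | Y₁, Y₂, U₁) is the conditional entropy of the plus channel input; equivalently, the sum of the plus- and minus-channel conditional entropies equals the sum of the original channel entropies. -/
noncomputable def binH (p : ℝ) : ℝ := -p * Real.logb 2 p - (1 - p) * Real.logb 2 (1 - p)

/-- binary convolution `a ⋆ b`. -/
def bconv (a b : ℝ) : ℝ := a * (1 - b) + b * (1 - a)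

/-- Bernoulli(p) pmf on `ZMod 2`. -/
noncomputable def ber (p : ℝ) (e : ZMod 2) : ℝ := if e = 1 then p else 1 - p

/-- Sample space: `(u₁, u₂, e₁, e₂)`. -/
abbrev Ω4 : Type := ZMod 2 × ZMod 2 × ZMod 2 × ZMod 2

/-- Joint probability: `U₁, U₂` i.i.d. uniform, `E₁ ~ Ber(p₁)`, `E₂ ~ Ber(p₂)`, all independent. -/
noncomputable def jointP (p₁ p₂ : ℝ) (ω : Ω4) : ℝ :=
  (1/4) * ber p₁ ω.2.2.1 * ber p₂ ω.2.2.2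

/-- Conditional entropy `H(A | B)` (in bits) of random variables on the finite space `Ω4`
weighted by `jointP p₁ p₂`. -/
noncomputable def condEnt {α β : Type*} [Fintype α] [DecidableEq α] [Fintype β] [DecidableEq β]
    (p₁ p₂ : ℝ) (A : Ω4 → α) (B : Ω4 → β) : ℝ :=
  -∑ a : α, ∑ b : β,
    (∑ ω : Ω4, if A ω = a ∧ B ω = b then jointP p₁ p₂ ω else 0) *
      Real.logb 2 ((∑ ω : Ω4, if A ω = a ∧ B ω = b then jointP p₁ p₂ ω else 0) /
        (∑ ω : Ω4, if B ω = b then jointP p₁ p₂ ω else 0))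

/-- `U₁` -/
def U₁ (ω : Ω4) : ZMod 2 := ω.1
/-- `U₂` -/
def U₂ (ω : Ω4) : ZMod 2 := ω.2.1
/-- `Y₁ = (U₁ ⊕ U₂) ⊕ E₁` -/
def Y₁ (ω : Ω4) : ZMod 2 := ω.1 + ω.2.1 + ω.2.2.1
/-- `Y₂ = U₂ ⊕ E₂` -/
def Y₂ (ω : Ω4) : ZMod 2 := ω.2.1 + ω.2.2.2

/-! Given the inputs, the outputs determine the noise: `(U, Y) = (u, y)` exactly when
`(U, E) = (u, y₁ + u₁ + u₂, y₂ + u₂)`. Hence every output pair has mass `1/4`, the conditional law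
of `U` given `Y` is the noise law `Ber(p₁) ⊗ Ber(p₂)` translated, and that of `U₁` given `Y` is
`Ber(p₁ ⋆ p₂)` translated (the law of `E₁ + E₂`); translation does not change entropy. The chain
rule `H(U₁, U₂ | Y) = H(U₁ | Y) + H(U₂ | Y, U₁)`, valid for conditional entropies of nonnegative
weights, then yields the plus-channel identity. -/

open Real Finset

lemma mul_logb_mul (b x y : ℝ) :
    x * y * logb b (x * y) = y * (x * logb b x) + x * (y * logb b y) := by
  rcases eq_or_ne x 0 with rfl | hx
  · simp
  rcases eq_or_ne y 0 with rfl | hy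
  · simp
  rw [logb_mul hx hy]
  ring

lemma mul_logb_div_of_le {b x y : ℝ} (hx : 0 ≤ x) (hxy : x ≤ y) :
    x * logb b (x / y) = x * logb b x - x * logb b y := by
  rcases hx.eq_or_lt with rfl | hx
  · simp
  rw [logb_div hx.ne' (hx.trans_le hxy).ne']
  ring

lemma sum_sum_mul_mul_logb_mul {ι κ : Type*} [Fintype ι] [Fintype κ] (b : ℝ) {x : ι → ℝ}
    {y : κ → ℝ} (hx : ∑ i, x i = 1) (hy : ∑ j, y j = 1) :
    ∑ i, ∑ j, x i * y j * logb b (x i * y j) =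
      ∑ i, x i * logb b (x i) + ∑ j, y j * logb b (y j) := by
  simp only [mul_logb_mul, sum_add_distrib, ← sum_mul, ← mul_sum, hx, hy, one_mul]

lemma ZMod.sum_two {M : Type*} [AddCommMonoid M] (f : ZMod 2 → M) : ∑ x, f x = f 0 + f 1 :=
  Fin.sum_univ_two f

lemma sum_comp_add_right {G M : Type*} [AddGroup G] [Fintype G] [AddCommMonoid M] (f : G → M)
    (c : G) : ∑ x, f (x + c) = ∑ x, f x :=
  Equiv.sum_comp (Equiv.addRight c) f

lemma sum_sum_ite_and {Ω α : Type*} [Fintype Ω] [Fintype α] [DecidableEq α] (w : Ω → ℝ)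
    (P : Ω → Prop) [DecidablePred P] (X : Ω → α) :
    ∑ x, ∑ ω, (if P ω ∧ X ω = x then w ω else 0) = ∑ ω, if P ω then w ω else 0 := by
  rw [sum_comm]
  refine sum_congr rfl fun ω _ => ?_
  by_cases hP : P ω <;> simp [hP]

namespace Weighted

variable {Ω α β : Type*} [Fintype Ω] [DecidableEq α] [DecidableEq β]

def mass (w : Ω → ℝ) (X : Ω → α) (x : α) : ℝ := ∑ ω, if X ω = x then w ω else 0

noncomputable def entropy [Fintype α] (w : Ω → ℝ) (X : Ω → α) : ℝ :=
  -∑ x, mass w X x * logb 2 (mass w X x)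

variable {w : Ω → ℝ}

lemma mass_nonneg (hw : ∀ ω, 0 ≤ w ω) (X : Ω → α) (x : α) : 0 ≤ mass w X x :=
  sum_nonneg fun ω _ => by split_ifs <;> simp [hw ω]

lemma mass_pair (A : Ω → α) (B : Ω → β) (a : α) (b : β) :
    mass w (fun ω => (A ω, B ω)) (a, b) = ∑ ω, if A ω = a ∧ B ω = b then w ω else 0 := by
  simp only [mass, Prod.mk.injEq]

lemma sum_mass_pair_left [Fintype α] (A : Ω → α) (B : Ω → β) (b : β) :
    ∑ a, mass w (fun ω => (A ω, B ω)) (a, b) = mass w B b := by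
  simp_rw [mass_pair, and_comm (a := A _ = _)]
  exact sum_sum_ite_and w (B · = b) A

lemma mass_pair_le [Fintype α] (hw : ∀ ω, 0 ≤ w ω) (A : Ω → α) (B : Ω → β) (a : α) (b : β) :
    mass w (fun ω => (A ω, B ω)) (a, b) ≤ mass w B b := by
  rw [← sum_mass_pair_left A B b]
  exact single_le_sum (fun a _ => mass_nonneg hw _ (a, b)) (mem_univ a)

lemma mass_comp_equiv (e : α ≃ β) (X : Ω → α) (y : β) :
    mass w (fun ω => e (X ω)) y = mass w X (e.symm y) := by
  simp only [mass, ← Equiv.eq_symm_apply]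

lemma entropy_comp_equiv [Fintype α] [Fintype β] (e : α ≃ β) (X : Ω → α) :
    entropy w (fun ω => e (X ω)) = entropy w X := by
  simp only [entropy, mass_comp_equiv]
  exact congrArg _ (e.symm.sum_comp fun x => mass w X x * logb 2 (mass w X x))

lemma entropy_pair [Fintype α] [Fintype β] (A : Ω → α) (B : Ω → β) :
    entropy w (fun ω => (A ω, B ω)) =
      -∑ a, ∑ b, mass w (fun ω => (A ω, B ω)) (a, b) *
        logb 2 (mass w (fun ω => (A ω, B ω)) (a, b)) := by
  rw [entropy, Fintype.sum_prod_type]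

lemma neg_sum_sum_mul_logb_div_mass [Fintype α] [Fintype β] (hw : ∀ ω, 0 ≤ w ω)
    (A : Ω → α) (B : Ω → β) :
    -∑ a, ∑ b, mass w (fun ω => (A ω, B ω)) (a, b) *
        logb 2 (mass w (fun ω => (A ω, B ω)) (a, b) / mass w B b) =
      entropy w (fun ω => (A ω, B ω)) - entropy w B := by
  simp only [mul_logb_div_of_le (mass_nonneg hw _ _) (mass_pair_le hw A B _ _), sum_sub_distrib,
    entropy_pair]
  rw [sum_comm (f := fun a b => mass w _ (a, b) * logb 2 (mass w B b))]
  simp only [← sum_mul, sum_mass_pair_left, entropy]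
  ring

end Weighted

open Weighted

section ConditionalEntropy

variable {α β γ : Type*} [Fintype α] [DecidableEq α] [Fintype β] [DecidableEq β]
  [Fintype γ] [DecidableEq γ] {p₁ p₂ : ℝ}

lemma condEnt_eq_entropy_sub (hw : ∀ ω, 0 ≤ jointP p₁ p₂ ω) (A : Ω4 → α) (B : Ω4 → β) :
    condEnt p₁ p₂ A B =
      entropy (jointP p₁ p₂) (fun ω => (A ω, B ω)) - entropy (jointP p₁ p₂) B := by
  rw [← neg_sum_sum_mul_logb_div_mass hw]
  simp only [condEnt, mass_pair]
  rfl

lemma condEnt_comp_equiv_right (hw : ∀ ω, 0 ≤ jointP p₁ p₂ ω) (e : β ≃ γ) (A : Ω4 → α)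
    (B : Ω4 → β) : condEnt p₁ p₂ A (fun ω => e (B ω)) = condEnt p₁ p₂ A B := by
  rw [condEnt_eq_entropy_sub hw, condEnt_eq_entropy_sub hw, entropy_comp_equiv,
    ← entropy_comp_equiv (Equiv.prodCongr (Equiv.refl α) e)]
  rfl

lemma condEnt_pair (hw : ∀ ω, 0 ≤ jointP p₁ p₂ ω) (A : Ω4 → α) (A' : Ω4 → γ) (B : Ω4 → β) :
    condEnt p₁ p₂ (fun ω => (A ω, A' ω)) B =
      condEnt p₁ p₂ A B + condEnt p₁ p₂ A' (fun ω => (B ω, A ω)) := by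
  simp only [condEnt_eq_entropy_sub hw]
  have hBA : entropy (jointP p₁ p₂) (fun ω => (B ω, A ω)) =
      entropy (jointP p₁ p₂) (fun ω => (A ω, B ω)) :=
    entropy_comp_equiv (Equiv.prodComm α β) fun ω => (A ω, B ω)
  have hA'BA : entropy (jointP p₁ p₂) (fun ω => (A' ω, B ω, A ω)) =
      entropy (jointP p₁ p₂) (fun ω => ((A ω, A' ω), B ω)) :=
    entropy_comp_equiv (α := (α × γ) × β)
      ⟨fun x => (x.1.2, x.2, x.1.1), fun y => ((y.2.2, y.1), y.2.1), fun _ => rfl, fun _ => rfl⟩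
      fun ω => ((A ω, A' ω), B ω)
  rw [hBA, hA'BA]
  ring

end ConditionalEntropy

lemma ber_nonneg {p : ℝ} (hp : p ∈ Set.Icc (0:ℝ) 1) (e : ZMod 2) : 0 ≤ ber p e := by
  unfold ber
  split_ifs <;> linarith [hp.1, hp.2]

lemma sum_ber (p : ℝ) : ∑ e, ber p e = 1 := by
  simp only [ber, ZMod.sum_two, zero_ne_one, ↓reduceIte, sub_add_cancel]

lemma binH_eq_neg_sum_ber (p : ℝ) : binH p = -∑ e, ber p e * logb 2 (ber p e) := by
  simp only [binH, ber, ZMod.sum_two, zero_ne_one, ↓reduceIte]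
  ring

lemma ber_bconv (p q : ℝ) (x y : ZMod 2) :
    ber (bconv p q) (x + y) = ber p x * ber q y + ber p (x + 1) * ber q (y + 1) := by
  have h (z : ZMod 2) : z = 0 ∨ z = 1 := by revert z; decide
  rcases h x with rfl | rfl <;> rcases h y with rfl | rfl <;> simp +decide [ber, bconv] <;> ring

lemma jointP_nonneg {p₁ p₂ : ℝ} (h₁ : p₁ ∈ Set.Icc (0:ℝ) 1) (h₂ : p₂ ∈ Set.Icc (0:ℝ) 1)
    (ω : Ω4) : 0 ≤ jointP p₁ p₂ ω := by
  have := ber_nonneg h₁ ω.2.2.1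
  have := ber_nonneg h₂ ω.2.2.2
  unfold jointP
  positivity

section Channel

variable (p₁ p₂ : ℝ)

lemma inputs_outputs_eq_iff (ω : Ω4) (u y : ZMod 2 × ZMod 2) :
    ((U₁ ω, U₂ ω) = u ∧ (Y₁ ω, Y₂ ω) = y) ↔ ω = (u.1, u.2, y.1 + u.1 + u.2, y.2 + u.2) := by
  obtain ⟨u₁, u₂, e₁, e₂⟩ := ω
  obtain ⟨a₁, a₂⟩ := u
  obtain ⟨b₁, b₂⟩ := y
  revert u₁ u₂ e₁ e₂ a₁ a₂ b₁ b₂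
  decide

lemma sum_jointP_inputs_outputs (u y : ZMod 2 × ZMod 2) :
    (∑ ω, if (U₁ ω, U₂ ω) = u ∧ (Y₁ ω, Y₂ ω) = y then jointP p₁ p₂ ω else 0) =
      1/4 * (ber p₁ (y.1 + u.1 + u.2) * ber p₂ (y.2 + u.2)) := by
  simp_rw [inputs_outputs_eq_iff, Fintype.sum_ite_eq', jointP, mul_assoc]

lemma sum_jointP_first_input_outputs (a : ZMod 2) (y : ZMod 2 × ZMod 2) :
    (∑ ω, if U₁ ω = a ∧ (Y₁ ω, Y₂ ω) = y then jointP p₁ p₂ ω else 0) =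
      1/4 * ber (bconv p₁ p₂) (a + (y.1 + y.2)) := by
  rw [← sum_sum_ite_and _ _ U₂]
  have hcond (ω : Ω4) (u₂ : ZMod 2) : ((U₁ ω = a ∧ (Y₁ ω, Y₂ ω) = y) ∧ U₂ ω = u₂) ↔
      ((U₁ ω, U₂ ω) = (a, u₂) ∧ (Y₁ ω, Y₂ ω) = y) := by
    simp only [Prod.mk.injEq]
    tauto
  simp_rw [hcond, sum_jointP_inputs_outputs, ZMod.sum_two]
  rw [show a + (y.1 + y.2) = (y.1 + a) + y.2 by ring, ber_bconv]
  simp only [add_zero]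
  ring

lemma sum_jointP_outputs (y : ZMod 2 × ZMod 2) :
    (∑ ω, if (Y₁ ω, Y₂ ω) = y then jointP p₁ p₂ ω else 0) = 1/4 := by
  have h := sum_sum_ite_and (jointP p₁ p₂) (fun ω => (Y₁ ω, Y₂ ω) = y) U₁
  simp_rw [and_comm, sum_jointP_first_input_outputs, ← mul_sum] at h
  rw [← h, sum_comp_add_right (ber (bconv p₁ p₂)), sum_ber, mul_one]

lemma condEnt_first_input_outputs :
    condEnt p₁ p₂ U₁ (fun ω => (Y₁ ω, Y₂ ω)) = binH (bconv p₁ p₂) := by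
  set f : ZMod 2 → ℝ := fun e => ber (bconv p₁ p₂) e * logb 2 (ber (bconv p₁ p₂) e)
  calc condEnt p₁ p₂ U₁ (fun ω => (Y₁ ω, Y₂ ω))
      = -∑ y : ZMod 2 × ZMod 2, 1/4 * ∑ a, f (a + (y.1 + y.2)) := by
        simp only [condEnt, sum_jointP_first_input_outputs, sum_jointP_outputs,
          mul_div_cancel_left₀ _ (by norm_num : (1/4 : ℝ) ≠ 0)]
        rw [sum_comm]
        simp only [mul_sum, mul_assoc, f]
    _ = -∑ e, f e := by
        simp only [sum_comp_add_right f, sum_const, card_univ, Fintype.card_prod, ZMod.card]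
        ring
    _ = binH (bconv p₁ p₂) := (binH_eq_neg_sum_ber _).symm

lemma condEnt_inputs_outputs :
    condEnt p₁ p₂ (fun ω => (U₁ ω, U₂ ω)) (fun ω => (Y₁ ω, Y₂ ω)) = binH p₁ + binH p₂ := by
  set f : ZMod 2 × ZMod 2 → ℝ := fun e =>
    ber p₁ e.1 * ber p₂ e.2 * logb 2 (ber p₁ e.1 * ber p₂ e.2)
  calc condEnt p₁ p₂ (fun ω => (U₁ ω, U₂ ω)) (fun ω => (Y₁ ω, Y₂ ω))
      = -∑ u : ZMod 2 × ZMod 2, 1/4 * ∑ y, f (y + (u.1 + u.2, u.2)) := by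
        simp only [condEnt, sum_jointP_inputs_outputs, sum_jointP_outputs,
          mul_div_cancel_left₀ _ (by norm_num : (1/4 : ℝ) ≠ 0)]
        simp only [mul_sum, mul_assoc, f, Prod.fst_add, Prod.snd_add, add_assoc]
    _ = -∑ e, f e := by
        simp only [sum_comp_add_right f, sum_const, card_univ, Fintype.card_prod, ZMod.card]
        ring
    _ = binH p₁ + binH p₂ := by
        rw [Fintype.sum_prod_type, sum_sum_mul_mul_logb_mul 2 (sum_ber p₁) (sum_ber p₂),
          binH_eq_neg_sum_ber, binH_eq_neg_sum_ber]
        ring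

end Channel

theorem arikan_entropy_conservation (p₁ p₂ : ℝ)
    (h₁ : p₁ ∈ Set.Icc (0:ℝ) 1) (h₂ : p₂ ∈ Set.Icc (0:ℝ) 1) :
    condEnt p₁ p₂ U₁ (fun ω => (Y₁ ω, Y₂ ω)) = binH (bconv p₁ p₂) ∧
    binH (bconv p₁ p₂) + condEnt p₁ p₂ U₂ (fun ω => (Y₁ ω, Y₂ ω, U₁ ω)) = binH p₁ + binH p₂ ∧
    condEnt p₁ p₂ U₁ (fun ω => (Y₁ ω, Y₂ ω)) +
      condEnt p₁ p₂ U₂ (fun ω => (Y₁ ω, Y₂ ω, U₁ ω)) =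
      condEnt p₁ p₂ (fun ω => (U₁ ω, U₂ ω)) (fun ω => (Y₁ ω, Y₂ ω)) := by
  have hw := jointP_nonneg h₁ h₂
  have chain : condEnt p₁ p₂ U₁ (fun ω => (Y₁ ω, Y₂ ω)) +
      condEnt p₁ p₂ U₂ (fun ω => (Y₁ ω, Y₂ ω, U₁ ω)) =
      condEnt p₁ p₂ (fun ω => (U₁ ω, U₂ ω)) (fun ω => (Y₁ ω, Y₂ ω)) := by
    rw [condEnt_pair hw, ← condEnt_comp_equiv_right hw (Equiv.prodAssoc _ _ _)]
    rfl
  refine ⟨condEnt_first_input_outputs p₁ p₂, ?_, chain⟩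
  rw [← condEnt_first_input_outputs, chain, condEnt_inputs_outputs]
end

section
/- Under the constraint Σᵢ pᵢρᵢ = D with fixed positive weights ρᵢ and pᵢ ∈ [0, 1/2], the maximum of Σᵢ h₂(pᵢ) is attained by a Gibbs distribution: there exists λ ≥ 0 such that pᵢ = exp(-λρᵢ)/(1+exp(-λρᵢ)) maximizes Σᵢ h₂(pᵢ) among all feasible p, provided D lies in the appropriate range (0 < D ≤ ½Σᵢρᵢ). -/
/-!
Binary entropy `H` is concave with derivative `log ((1 - q) / q)` at `q`. At the Gibbs point
`qᵢ = σ(-l ρᵢ)` (`σ` the logistic sigmoid) this slope is exactly `l ρᵢ`. Summing the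
tangent-line bounds `H(pᵢ) ≤ H(qᵢ) + l ρᵢ (pᵢ - qᵢ)` over `i`, the linear terms cancel for every
`p` meeting the distortion constraint, so `q` is a maximizer. A Gibbs point meeting the
constraint exists by the intermediate value theorem: `l ↦ ∑ σ(-l ρᵢ) ρᵢ` is continuous, equals
`½ ∑ ρᵢ` at `l = 0` and tends to `0` as `l → ∞`.
-/

open Real Set Filter Topology

theorem ConcaveOn.le_add_mul_sub_of_hasDerivAt {S : Set ℝ} {f : ℝ → ℝ} {x y f' : ℝ}
    (hf : ConcaveOn ℝ S f) (hx : x ∈ S) (hy : y ∈ S) (hf' : HasDerivAt f f' x) :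
    f y ≤ f x + f' * (y - x) := by
  rcases lt_trichotomy x y with hxy | rfl | hyx
  · have := hf.slope_le_of_hasDerivAt hx hy hxy hf'
    rw [slope_def_field, div_le_iff₀ (sub_pos.2 hxy)] at this
    linarith
  · simp
  · have := hf.le_slope_of_hasDerivAt hy hx hyx hf'
    rw [slope_def_field, le_div_iff₀ (sub_pos.2 hyx)] at this
    linarith

theorem binEntropy_le_add_mul_sub {p q : ℝ} (hp : p ∈ Icc 0 1) (hq : q ∈ Ioo 0 1) :
    binEntropy p ≤ binEntropy q + (log (1 - q) - log q) * (p - q) :=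
  strictConcave_binEntropy.concaveOn.le_add_mul_sub_of_hasDerivAt (Ioo_subset_Icc_self hq) hp
    (hasDerivAt_binEntropy hq.1.ne' hq.2.ne)

theorem log_one_sub_sigmoid_sub_log_sigmoid (x : ℝ) :
    log (1 - sigmoid x) - log (sigmoid x) = -x := by
  rw [← sigmoid_neg, ← sigmoid_mul_rexp_neg, log_mul (sigmoid_pos x).ne' (exp_pos _).ne', log_exp]
  ring

theorem binEntropy_le_binEntropy_sigmoid_add {p : ℝ} (hp : p ∈ Icc 0 1) (x : ℝ) :
    binEntropy p ≤ binEntropy (sigmoid x) - x * (p - sigmoid x) := by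
  have := binEntropy_le_add_mul_sub hp ⟨sigmoid_pos x, sigmoid_lt_one x⟩
  rwa [log_one_sub_sigmoid_sub_log_sigmoid, neg_mul, ← sub_eq_add_neg] at this

theorem exp_div_one_add_exp (x : ℝ) : exp x / (1 + exp x) = sigmoid x := by
  rw [sigmoid_def, exp_neg]
  field_simp
  ring

theorem binH_eq_binEntropy_div (p : ℝ) : binH p = binEntropy p / log 2 := by
  rw [binH, binEntropy, logb, logb, log_inv, log_inv]
  ring

theorem exists_ge_eq_of_tendsto_atTop {f : ℝ → ℝ} {a c y : ℝ} (hf : ContinuousOn f (Ici a))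
    (hlim : Tendsto f atTop (𝓝 c)) (hcy : c < y) (hya : y ≤ f a) : ∃ x, a ≤ x ∧ f x = y := by
  obtain ⟨b, hby, hab⟩ := ((hlim.eventually_lt_const hcy).and (eventually_ge_atTop a)).exists
  obtain ⟨x, hx, rfl⟩ :=
    intermediate_value_Icc' hab (hf.mono Icc_subset_Ici_self) ⟨hby.le, hya⟩
  exact ⟨x, hx.1, rfl⟩

section Gibbs

variable {ι : Type*} [Fintype ι]

theorem sum_binEntropy_le_sum_binEntropy_sigmoid {ρ p : ι → ℝ} {l : ℝ}
    (hp : ∀ i, p i ∈ Icc 0 1) (hsum : ∑ i, p i * ρ i = ∑ i, sigmoid (-l * ρ i) * ρ i) :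
    ∑ i, binEntropy (p i) ≤ ∑ i, binEntropy (sigmoid (-l * ρ i)) := by
  have tangent : ∀ i, binEntropy (p i) ≤
      binEntropy (sigmoid (-l * ρ i)) + l * (p i * ρ i - sigmoid (-l * ρ i) * ρ i) := fun i => by
    linarith [binEntropy_le_binEntropy_sigmoid_add (hp i) (-l * ρ i)]
  calc ∑ i, binEntropy (p i)
      ≤ ∑ i, (binEntropy (sigmoid (-l * ρ i)) + l * (p i * ρ i - sigmoid (-l * ρ i) * ρ i)) :=
        Finset.sum_le_sum fun i _ => tangent i
    _ = ∑ i, binEntropy (sigmoid (-l * ρ i)) := by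
        rw [Finset.sum_add_distrib, ← Finset.mul_sum, Finset.sum_sub_distrib, hsum, sub_self,
          mul_zero, add_zero]

theorem exists_sum_sigmoid_mul_eq {ρ : ι → ℝ} (hρ : ∀ i, 0 < ρ i) {D : ℝ} (hD : 0 < D)
    (hD2 : D ≤ (1 / 2) * ∑ i, ρ i) : ∃ l, 0 ≤ l ∧ ∑ i, sigmoid (-l * ρ i) * ρ i = D := by
  have hcont : Continuous fun l => ∑ i, sigmoid (-l * ρ i) * ρ i := by fun_prop
  have hlim : Tendsto (fun l => ∑ i, sigmoid (-l * ρ i) * ρ i) atTop (𝓝 0) := by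
    simpa using tendsto_finsetSum Finset.univ fun i _ =>
      (tendsto_sigmoid_atBot.comp ((tendsto_neg_atTop_atBot.comp tendsto_id).atBot_mul_const
        (hρ i))).mul_const (ρ i)
  have hzero : ∑ i, sigmoid (-0 * ρ i) * ρ i = (1 / 2) * ∑ i, ρ i := by
    simp [sigmoid_zero, Finset.mul_sum]
  exact exists_ge_eq_of_tendsto_atTop hcont.continuousOn hlim hD (hzero ▸ hD2)

end Gibbs

theorem gibbs_maximizes_DLS (N : ℕ) (ρ : Fin N → ℝ) (hρ : ∀ i, 0 < ρ i) (D : ℝ)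
    (hD : 0 < D) (hD2 : D ≤ (1/2) * ∑ i, ρ i) :
    ∃ l : ℝ, 0 ≤ l ∧
      (∑ i, (Real.exp (-l * ρ i) / (1 + Real.exp (-l * ρ i))) * ρ i = D) ∧
      (∀ p : Fin N → ℝ, (∀ i, p i ∈ Set.Icc (0:ℝ) (1/2)) → (∑ i, p i * ρ i = D) →
        ∑ i, binH (p i) ≤ ∑ i, binH (Real.exp (-l * ρ i) / (1 + Real.exp (-l * ρ i)))) := by
  simp only [exp_div_one_add_exp, binH_eq_binEntropy_div, ← Finset.sum_div]
  obtain ⟨l, hl, hlD⟩ := exists_sum_sigmoid_mul_eq hρ hD hD2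
  refine ⟨l, hl, hlD, fun p hp hpD => ?_⟩
  have hp01 : ∀ i, p i ∈ Icc 0 1 := fun i => ⟨(hp i).1, (hp i).2.trans (by norm_num)⟩
  exact div_le_div_of_nonneg_right
    (sum_binEntropy_le_sum_binEntropy_sigmoid hp01 (hpD.trans hlD.symm)) (log_nonneg one_le_two)
end
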